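/- Let ψ_h: ℝ^m → ℝ ∪ {+∞} be a proper lsc μ-strongly convex function with conjugate ψ_h*, and let g: ℝ^n → ℝ be convex differentiable with L_g-Lipschitz gradient. Define θ(x, λ) = g(x) + λᵀ(Ax + c) + ψ_h*(KᵀX + Bᵀλ) where K ∈ ℝ^{n×m}, A ∈ ℝ^{q×n}, B ∈ ℝ^{q×m}, c ∈ ℝ^q. Then θ is continuously differentiable and ∇θ is (γ/μ)-Lipschitz, where γ = max{ √(2(L_gμ + ‖K‖²)² + 2(‖A‖μ + ‖K‖‖B‖)²), √(2(μ‖A‖ + ‖K‖‖B‖)² + 2‖B‖⁴) }. -/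

import Mathlib

open RealInnerProductSpace

noncomputable section

def ERealConvexOn {E : Type*} [AddCommGroup E] [Module ℝ E] (σ : E → EReal) : Prop :=
  ∀ x y : E, ∀ a b : ℝ, 0 ≤ a → 0 ≤ b → a + b = 1 →
    σ (a • x + b • y) ≤ (a : EReal) * σ x + (b : EReal) * σ y


set_option linter.unusedSectionVars false
variable {E : Type*} [NormedAddCommGroup E] [InnerProductSpace ℝ E] [FiniteDimensional ℝ E]

section conj
variable {μ : ℝ} {ψ : E → EReal} {ψs : E → ℝ}

/-- real value of ψ at a point of its domain -/
def rψ (ψ : E → EReal) (y : E) : ℝ := (ψ y).toReal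

lemma psi_real (hbot : ∀ y, ψ y ≠ ⊥) {y : E} (hy : ψ y ≠ ⊤) : ψ y = ((rψ ψ y : ℝ) : EReal) :=
  (EReal.coe_toReal hy (hbot y)).symm

lemma conj_ge (hbot : ∀ y, ψ y ≠ ⊥)
    (hconj : ∀ v, ((ψs v : ℝ) : EReal) = ⨆ y, ((⟪v, y⟫ : EReal) - ψ y))
    (v : E) {y : E} (hy : ψ y ≠ ⊤) : ⟪v, y⟫ - rψ ψ y ≤ ψs v := by
  have h := le_iSup (fun y => ((⟪v, y⟫ : EReal) - ψ y)) y
  rw [← hconj v, psi_real hbot hy, ← EReal.coe_sub] at h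
  exact_mod_cast h

lemma conj_eps (hconj : ∀ v, ((ψs v : ℝ) : EReal) = ⨆ y, ((⟪v, y⟫ : EReal) - ψ y))
    (hbot : ∀ y, ψ y ≠ ⊥) (v : E) {ε : ℝ} (hε : 0 < ε) :
    ∃ y, ψ y ≠ ⊤ ∧ ψs v - ε < ⟪v, y⟫ - rψ ψ y := by
  have h : ((ψs v - ε : ℝ) : EReal) < ⨆ y, ((⟪v, y⟫ : EReal) - ψ y) := by
    rw [← hconj v]; exact_mod_cast sub_lt_self _ hε
  rw [lt_iSup_iff] at h
  obtain ⟨y, hy⟩ := h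
  have hytop : ψ y ≠ ⊤ := by
    intro h'
    rw [h'] at hy
    simp [sub_eq_add_neg] at hy
  refine ⟨y, hytop, ?_⟩
  rw [psi_real hbot hytop, ← EReal.coe_sub] at hy
  exact_mod_cast hy

end conj

section sc
variable {μ : ℝ} {ψ : E → EReal} {ψs : E → ℝ}

lemma norm_combo (y1 y2 : E) (a b : ℝ) (hab : a + b = 1) :
    ‖a • y1 + b • y2‖ ^ 2 = a * ‖y1‖ ^ 2 + b * ‖y2‖ ^ 2 - a * b * ‖y1 - y2‖ ^ 2 := by
  obtain rfl : b = 1 - a := by linarith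
  have e : ∀ x : E, ‖x‖ ^ 2 = ⟪x, x⟫ := fun x => (real_inner_self_eq_norm_sq x).symm
  rw [e, e, e, e]
  simp only [inner_add_left, inner_add_right, inner_sub_left, inner_sub_right,
    inner_smul_left, inner_smul_right, RCLike.ofReal_real_eq_id, id_eq,
    real_inner_comm y2 y1, starRingEnd_apply, star_trivial]
  ring

lemma sc_real (hbot : ∀ y, ψ y ≠ ⊥)
    (hsc : ERealConvexOn (fun y => ψ y - ((μ / 2 * ‖y‖ ^ 2 : ℝ) : EReal)))
    {y1 y2 : E} (h1 : ψ y1 ≠ ⊤) (h2 : ψ y2 ≠ ⊤) {a b : ℝ}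
    (ha : 0 ≤ a) (hb : 0 ≤ b) (hab : a + b = 1) :
    ψ (a • y1 + b • y2) ≠ ⊤ ∧
      rψ ψ (a • y1 + b • y2) ≤ a * rψ ψ y1 + b * rψ ψ y2 - μ * a * b / 2 * ‖y1 - y2‖ ^ 2 := by
  have h := hsc y1 y2 a b ha hb hab
  simp only at h
  rw [psi_real hbot h1, psi_real hbot h2] at h
  rw [← EReal.coe_sub, ← EReal.coe_sub, ← EReal.coe_mul, ← EReal.coe_mul, ← EReal.coe_add] at h
  set z := a • y1 + b • y2 with hz
  set R : ℝ := a * (rψ ψ y1 - μ / 2 * ‖y1‖ ^ 2) + b * (rψ ψ y2 - μ / 2 * ‖y2‖ ^ 2) with hR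
  have hle : ψ z ≤ ((R + μ / 2 * ‖z‖ ^ 2 : ℝ) : EReal) := by
    rw [EReal.coe_add]
    exact (EReal.sub_le_iff_le_add (Or.inl (EReal.coe_ne_bot _))
      (Or.inl (EReal.coe_ne_top _))).mp h
  have hztop : ψ z ≠ ⊤ := by
    intro h'
    rw [h'] at hle
    exact absurd (top_le_iff.mp hle) (EReal.coe_ne_top _)
  refine ⟨hztop, ?_⟩
  rw [psi_real hbot hztop] at hle
  have hle' : rψ ψ z ≤ R + μ / 2 * ‖z‖ ^ 2 := by exact_mod_cast hle
  have hn := norm_combo y1 y2 a b hab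
  rw [← hz] at hn
  rw [hn] at hle'
  nlinarith [hle']

end sc

section maxex
variable {μ : ℝ} {ψ : E → EReal} {ψs : E → ℝ}

lemma max_exists (hμ : 0 < μ) (htop : ∃ y, ψ y ≠ ⊤) (hbot : ∀ y, ψ y ≠ ⊥)
    (hlsc : LowerSemicontinuous ψ)
    (hsc : ERealConvexOn (fun y => ψ y - ((μ / 2 * ‖y‖ ^ 2 : ℝ) : EReal)))
    (hconj : ∀ v, ((ψs v : ℝ) : EReal) = ⨆ y, ((⟪v, y⟫ : EReal) - ψ y))
    (v : E) : ∃ yv, ψ yv ≠ ⊤ ∧ ⟪v, yv⟫ - rψ ψ yv = ψs v := by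
  obtain ⟨y0, h0⟩ := htop
  -- choose an approximating sequence
  have hseq : ∀ k : ℕ, ∃ y, ψ y ≠ ⊤ ∧ ψs v - 1 / (k + 1) < ⟪v, y⟫ - rψ ψ y := by
    intro k
    exact conj_eps hconj hbot v (by positivity)
  choose y hytop hyval using hseq
  -- boundedness
  set F : E → ℝ := fun z => ⟪v, z⟫ - rψ ψ z with hF
  have hFub : ∀ z, ψ z ≠ ⊤ → F z ≤ ψs v := fun z hz => conj_ge hbot hconj v hz
  have hbound : ∀ k, μ * ‖y k - y0‖ ^ 2 ≤ 8 * (ψs v + 1 - F y0) := by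
    intro k
    have hsr := sc_real hbot hsc h0 (hytop k) (a := 1/2) (b := 1/2)
      (by norm_num) (by norm_num) (by norm_num)
    have hub := hFub _ hsr.1
    have hlow : ψs v - 1 ≤ F (y k) := by
      have := hyval k
      have h1 : (1 : ℝ) / (k + 1) ≤ 1 := by
        rw [div_le_one (by positivity)]; linarith [Nat.cast_nonneg (α := ℝ) k]
      simp only [hF]; linarith
    have hmid : F ((1/2 : ℝ) • y0 + (1/2 : ℝ) • y k)
        ≥ 1/2 * F y0 + 1/2 * F (y k) + μ / 8 * ‖y0 - y k‖ ^ 2 := by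
      have hin : ⟪v, (1/2 : ℝ) • y0 + (1/2 : ℝ) • y k⟫ = 1/2 * ⟪v, y0⟫ + 1/2 * ⟪v, y k⟫ := by
        simp [inner_add_right, inner_smul_right]
      simp only [hF, hin]
      have := hsr.2
      nlinarith [this]
    rw [norm_sub_rev] at hmid
    have e3 := hFub y0 h0
    set d2 : ℝ := ‖y k - y0‖ ^ 2 with hd2
    set q1 : ℝ := F ((1/2 : ℝ) • y0 + (1/2 : ℝ) • y k) with hq1
    set q2 : ℝ := F y0 with hq2
    set q3 : ℝ := F (y k) with hq3
    clear_value d2 q1 q2 q3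
    have e1 : μ / 8 * d2 ≤ ψs v - 1/2*q2 - 1/2*q3 := by linarith
    have e2 : μ * d2 ≤ 8 * ψs v - 4*q2 - 4*q3 := by linarith
    linarith
  -- compactness
  set R : ℝ := Real.sqrt (8 * (ψs v + 1 - F y0) / μ) with hRdef
  have hmem : ∀ k, y k ∈ Metric.closedBall y0 R := by
    intro k
    rw [Metric.mem_closedBall, dist_eq_norm]
    have h1 : ‖y k - y0‖ ^ 2 ≤ 8 * (ψs v + 1 - F y0) / μ :=
      (le_div_iff₀' hμ).mpr (hbound k)
    have h2 : ‖y k - y0‖ ^ 2 ≤ R ^ 2 := by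
      rw [hRdef, Real.sq_sqrt (le_trans (sq_nonneg _) h1)]; exact h1
    have hR0 : 0 ≤ R := Real.sqrt_nonneg _
    nlinarith [norm_nonneg (y k - y0)]
  obtain ⟨ystar, -, φ, hφmono, hφtend⟩ :=
    (isCompact_closedBall y0 R).tendsto_subseq hmem
  -- lsc argument
  refine ⟨ystar, ?_⟩
  set r : ℝ := ⟪v, ystar⟫ - ψs v with hrdef
  have hkey : ψ ystar ≤ ((r : ℝ) : EReal) := by
    by_contra hcon
    push_neg at hcon
    obtain ⟨cE, hc1, hc2⟩ := exists_between hcon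
    have hcbot : cE ≠ ⊥ := fun h => by rw [h] at hc1; exact absurd hc1 (by simp)
    have hctop : cE ≠ ⊤ := fun h => by rw [h] at hc2; exact absurd hc2 (by simp)
    set c : ℝ := cE.toReal with hcdef
    have hcE : cE = ((c : ℝ) : EReal) := (EReal.coe_toReal hctop hcbot).symm
    -- eventually c < ψ (y (φ k))
    have hev1 : ∀ᶠ k in Filter.atTop, cE < ψ (y (φ k)) :=
      hφtend.eventually ((hlsc ystar) cE hc2)
    -- but rψ ψ (y (φ k)) ≤ ⟪v, y (φ k)⟫ - ψs v + 1/(φ k + 1) → r < c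
    have htend1 : Filter.Tendsto (fun k => ⟪v, y (φ k)⟫ - ψs v + 1 / ((φ k : ℝ) + 1))
        Filter.atTop (nhds r) := by
      have ht1 : Filter.Tendsto (fun k => ⟪v, y (φ k)⟫) Filter.atTop (nhds ⟪v, ystar⟫) :=
        ((continuous_const.inner continuous_id).tendsto ystar).comp hφtend
      have ht2 : Filter.Tendsto (fun k => 1 / ((φ k : ℝ) + 1)) Filter.atTop (nhds 0) := by
        have := tendsto_one_div_add_atTop_nhds_zero_nat (𝕜 := ℝ)
        exact this.comp (hφmono.tendsto_atTop)
      have := (ht1.sub (tendsto_const_nhds (x := ψs v))).add ht2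
      simpa using this
    have hclt : r < c := by
      rw [hcdef]
      have : ((r : ℝ) : EReal) < cE := hc1
      rw [hcE] at this
      exact_mod_cast this
    have hev2 : ∀ᶠ k in Filter.atTop,
        ⟪v, y (φ k)⟫ - ψs v + 1 / ((φ k : ℝ) + 1) < c :=
      htend1.eventually_lt_const hclt
    obtain ⟨k, hk1, hk2⟩ := (hev1.and hev2).exists
    -- from hk1 : cE < ψ (y (φ k)), real values
    rw [psi_real hbot (hytop (φ k)), hcE] at hk1
    have hclt2 : c < rψ ψ (y (φ k)) := by exact_mod_cast hk1
    have := hyval (φ k)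
    linarith
  have hstop : ψ ystar ≠ ⊤ := fun h => by rw [h] at hkey; exact absurd (top_le_iff.mp hkey) (EReal.coe_ne_top _)
  refine ⟨hstop, le_antisymm (hFub ystar hstop) ?_⟩
  have : rψ ψ ystar ≤ r := by
    rw [psi_real hbot hstop] at hkey
    exact_mod_cast hkey
  simp only [hrdef] at this ⊢
  linarith

end maxex

section smooth
variable {μ : ℝ} {ψ : E → EReal} {ψs : E → ℝ}

lemma conj_smooth (hμ : 0 < μ) (htop : ∃ y, ψ y ≠ ⊤) (hbot : ∀ y, ψ y ≠ ⊥)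
    (hlsc : LowerSemicontinuous ψ)
    (hsc : ERealConvexOn (fun y => ψ y - ((μ / 2 * ‖y‖ ^ 2 : ℝ) : EReal)))
    (hconj : ∀ v, ((ψs v : ℝ) : EReal) = ⨆ y, ((⟪v, y⟫ : EReal) - ψ y)) :
    ∃ Y : E → E, (∀ v, HasGradientAt ψs (Y v) v) ∧
      (∀ v w, μ * ‖Y w - Y v‖ ≤ ‖w - v‖) ∧ Continuous Y := by
  choose Y hYtop hYval using max_exists hμ htop hbot hlsc hsc hconj
  -- strong concavity at the maximizer
  have hE : ∀ v y, ψ y ≠ ⊤ →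
      ⟪v, y⟫ - rψ ψ y + μ / 2 * ‖y - Y v‖ ^ 2 ≤ ψs v := by
    intro v y hy
    have key : ∀ t : ℝ, 0 < t → t < 1 →
        ⟪v, y⟫ - rψ ψ y + μ * (1 - t) / 2 * ‖y - Y v‖ ^ 2 ≤ ψs v := by
      intro t ht0 ht1
      have hsr := sc_real hbot hsc (hYtop v) hy (a := 1 - t) (b := t)
        (by linarith) (by linarith) (by ring)
      have hub := conj_ge hbot hconj v hsr.1
      have hin : ⟪v, (1 - t) • Y v + t • y⟫ = (1 - t) * ⟪v, Y v⟫ + t * ⟪v, y⟫ := by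
        simp [inner_add_right, inner_smul_right]
      rw [hin] at hub
      have hYv := hYval v
      have hns : ‖Y v - y‖ ^ 2 = ‖y - Y v‖ ^ 2 := by rw [norm_sub_rev]
      rw [hns] at hsr
      have h2 := hsr.2
      have expand : (1 - t) * (⟪v, Y v⟫ - rψ ψ (Y v)) + t * (⟪v, y⟫ - rψ ψ y)
          + μ * (1 - t) * t / 2 * ‖y - Y v‖ ^ 2 ≤ ψs v := by nlinarith [hub, h2]
      rw [hYv] at expand
      have hq : t * (⟪v, y⟫ - rψ ψ y - ψs v) + μ * (1 - t) * t / 2 * ‖y - Y v‖ ^ 2 ≤ 0 := by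
        nlinarith [expand]
      have := mul_le_mul_of_nonneg_left hq (le_of_lt (inv_pos.mpr ht0))
      rw [mul_zero] at this
      have ht0' : t ≠ 0 := ne_of_gt ht0
      have e : t⁻¹ * (t * (⟪v, y⟫ - rψ ψ y - ψs v) + μ * (1 - t) * t / 2 * ‖y - Y v‖ ^ 2)
          = (⟪v, y⟫ - rψ ψ y - ψs v) + μ * (1 - t) / 2 * ‖y - Y v‖ ^ 2 := by
        field_simp
      rw [e] at this
      linarith
    by_contra hcon
    push_neg at hcon
    set D : ℝ := ‖y - Y v‖ ^ 2 with hD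
    have hD0 : 0 ≤ D := sq_nonneg _
    set δ : ℝ := ⟪v, y⟫ - rψ ψ y + μ / 2 * D - ψs v with hδ
    have hδ0 : 0 < δ := by simp only [hδ]; linarith
    set t : ℝ := min (1/2) (δ / (μ * D + 1)) with ht
    have hμD : 0 < μ * D + 1 := by nlinarith
    have ht0 : 0 < t := lt_min (by norm_num) (div_pos hδ0 hμD)
    have ht1 : t < 1 := lt_of_le_of_lt (min_le_left _ _) (by norm_num)
    have hk := key t ht0 ht1
    -- μ/2 * t * D ≤ δ/2
    have hb1 : t ≤ δ / (μ * D + 1) := min_le_right _ _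
    have hb2 : μ * t * D ≤ δ := by
      have : μ * D * t ≤ μ * D * (δ / (μ * D + 1)) := by
        apply mul_le_mul_of_nonneg_left hb1 (by positivity)
      have h4 : μ * D / (μ * D + 1) ≤ 1 := (div_le_one hμD).mpr (by linarith)
      have h3 : μ * D * (δ / (μ * D + 1)) ≤ δ := by
        calc μ * D * (δ / (μ * D + 1)) = (μ * D / (μ * D + 1)) * δ := by ring
        _ ≤ 1 * δ := mul_le_mul_of_nonneg_right h4 hδ0.le
        _ = δ := one_mul δ
      nlinarith [this, h3]
    simp only [hδ] at hb2
    nlinarith [hk, hb2, ht0]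
  -- Lipschitz
  have hLip : ∀ v w, μ * ‖Y w - Y v‖ ≤ ‖w - v‖ := by
    intro v w
    have h1 := hE v (Y w) (hYtop w)
    have h2 := hE w (Y v) (hYtop v)
    have e1 : ⟪v, Y w⟫ = ⟪w, Y w⟫ - ⟪w - v, Y w⟫ := by
      rw [inner_sub_left]; ring
    have e2 : ⟪w, Y v⟫ = ⟪v, Y v⟫ + ⟪w - v, Y v⟫ := by
      rw [inner_sub_left]; ring
    rw [e1] at h1; rw [e2] at h2
    have hv := hYval v; have hw := hYval w
    have hns : ‖Y v - Y w‖ ^ 2 = ‖Y w - Y v‖ ^ 2 := by rw [norm_sub_rev]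
    rw [hns] at h2
    -- add: μ‖Δ‖² ≤ ⟪w-v, Yw - Yv⟫
    have hmono : μ * ‖Y w - Y v‖ ^ 2 ≤ ⟪w - v, Y w - Y v⟫ := by
      rw [inner_sub_right]
      nlinarith [h1, h2]
    have hcs : ⟪w - v, Y w - Y v⟫ ≤ ‖w - v‖ * ‖Y w - Y v‖ := real_inner_le_norm _ _
    rcases eq_or_lt_of_le (norm_nonneg (Y w - Y v)) with h0 | h0
    · rw [← h0]; simp [norm_nonneg]
    · have := le_trans hmono hcs
      have h4 : μ * ‖Y w - Y v‖ ^ 2 = (μ * ‖Y w - Y v‖) * ‖Y w - Y v‖ := by ring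
      rw [h4] at this
      exact le_of_mul_le_mul_right this h0
  -- gradient
  have hgrad : ∀ v, HasGradientAt ψs (Y v) v := by
    intro v
    have hlow : ∀ w, ψs v + ⟪Y v, w - v⟫ ≤ ψs w := by
      intro w
      have := conj_ge hbot hconj w (hYtop v)
      have e : ⟪w, Y v⟫ = ⟪v, Y v⟫ + ⟪w - v, Y v⟫ := by rw [inner_sub_left]; ring
      rw [e] at this
      have hv := hYval v
      rw [real_inner_comm]
      linarith
    have hupp : ∀ w, ψs w ≤ ψs v + ⟪Y v, w - v⟫ + 1 / (2 * μ) * ‖w - v‖ ^ 2 := by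
      intro w
      have h1 := hE v (Y w) (hYtop w)
      have hw := hYval w
      have e : ⟪v, Y w⟫ = ⟪w, Y w⟫ - ⟪w - v, Y w⟫ := by rw [inner_sub_left]; ring
      rw [e] at h1
      -- ψs w ≤ ψs v + ⟪w - v, Y w⟫ - μ/2 ‖Yw - Yv‖²
      have h2 : ψs w ≤ ψs v + ⟪w - v, Y w⟫ - μ / 2 * ‖Y w - Y v‖ ^ 2 := by linarith
      have e2 : ⟪w - v, Y w⟫ = ⟪w - v, Y v⟫ + ⟪w - v, Y w - Y v⟫ := by
        rw [← inner_add_right]; congr 1; abel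
      rw [e2] at h2
      have hcs : ⟪w - v, Y w - Y v⟫ ≤ ‖w - v‖ * ‖Y w - Y v‖ := real_inner_le_norm _ _
      have hamgm : ‖w - v‖ * ‖Y w - Y v‖ - μ / 2 * ‖Y w - Y v‖ ^ 2
          ≤ 1 / (2 * μ) * ‖w - v‖ ^ 2 := by
        have := sq_nonneg (μ * ‖Y w - Y v‖ - ‖w - v‖)
        have h5 : 0 < 2 * μ := by linarith
        rw [← sub_nonneg]
        have key : 1 / (2 * μ) * ‖w - v‖ ^ 2 - (‖w - v‖ * ‖Y w - Y v‖ - μ / 2 * ‖Y w - Y v‖ ^ 2)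
            = (μ * ‖Y w - Y v‖ - ‖w - v‖) ^ 2 / (2 * μ) := by field_simp; ring
        rw [key]
        positivity
      rw [real_inner_comm (w - v) (Y v)]
      linarith
    rw [hasGradientAt_iff_hasFDerivAt]
    rw [hasFDerivAt_iff_isLittleO]
    rw [Asymptotics.isLittleO_iff]
    intro ε hε
    have hball : Metric.ball v (2 * μ * ε) ∈ nhds v := Metric.ball_mem_nhds v (by positivity)
    filter_upwards [hball] with w hw
    rw [Metric.mem_ball, dist_eq_norm] at hw
    have hl := hlow w
    have hu := hupp w
    have htd : (InnerProductSpace.toDual ℝ E) (Y v) (w - v) = ⟪Y v, w - v⟫ := rfl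
    rw [Real.norm_eq_abs, abs_le]
    constructor
    · simp only [htd]
      have : -(ε * ‖w - v‖) ≤ 0 := by
        have : 0 ≤ ε * ‖w - v‖ := by positivity
        linarith
      linarith [hl]
    · simp only [htd]
      have hq : 1 / (2 * μ) * ‖w - v‖ ^ 2 ≤ ε * ‖w - v‖ := by
        have h1 : ‖w - v‖ < 2 * μ * ε := hw
        have h2 : 0 ≤ ‖w - v‖ := norm_nonneg _
        rw [div_mul_eq_mul_div, div_le_iff₀ (by positivity : (0:ℝ) < 2 * μ)]
        nlinarith
      linarith [hu]
  -- continuity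
  have hcont : Continuous Y := by
    have hlw : LipschitzWith (Real.toNNReal (1/μ)) Y := by
      apply LipschitzWith.of_dist_le_mul
      intro a b
      rw [dist_eq_norm, dist_eq_norm, Real.coe_toNNReal _ (by positivity)]
      have := hLip b a
      rw [div_mul_eq_mul_div, le_div_iff₀ hμ]
      linarith [this]
    exact hlw.continuous
  exact ⟨Y, hgrad, hLip, hcont⟩

end smooth

end
noncomputable section
open RealInnerProductSpace


lemma final_ineq (μ c1 c2 c3 c4 a b P Q M : ℝ) (hμ : 0 < μ)
    (hP0 : 0 ≤ P) (hQ0 : 0 ≤ Q) (hM0 : 0 ≤ M)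
    (hxP : μ * P ≤ c1 * a + c2 * b) (hxQ : μ * Q ≤ c3 * a + c4 * b)
    (hM2 : c1 ^ 2 + c2 ^ 2 + c3 ^ 2 + c4 ^ 2 ≤ M ^ 2) :
    Real.sqrt (P ^ 2 + Q ^ 2) ≤ M / μ * Real.sqrt (a ^ 2 + b ^ 2) := by
  have h1 : (μ * P) ^ 2 ≤ (c1 * a + c2 * b) ^ 2 :=
    pow_le_pow_left₀ (mul_nonneg hμ.le hP0) hxP 2
  have h2 : (μ * Q) ^ 2 ≤ (c3 * a + c4 * b) ^ 2 :=
    pow_le_pow_left₀ (mul_nonneg hμ.le hQ0) hxQ 2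
  have hcs1 : (c1 * a + c2 * b) ^ 2 ≤ (c1 ^ 2 + c2 ^ 2) * (a ^ 2 + b ^ 2) := by
    nlinarith [sq_nonneg (c1 * b - c2 * a)]
  have hcs2 : (c3 * a + c4 * b) ^ 2 ≤ (c3 ^ 2 + c4 ^ 2) * (a ^ 2 + b ^ 2) := by
    nlinarith [sq_nonneg (c3 * b - c4 * a)]
  have hfin : (c1 ^ 2 + c2 ^ 2 + c3 ^ 2 + c4 ^ 2) * (a ^ 2 + b ^ 2)
      ≤ M ^ 2 * (a ^ 2 + b ^ 2) :=
    mul_le_mul_of_nonneg_right hM2 (by positivity)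
  have hsq : μ ^ 2 * (P ^ 2 + Q ^ 2) ≤ M ^ 2 * (a ^ 2 + b ^ 2) := by
    nlinarith [h1, h2, hcs1, hcs2, hfin]
  have hdiv : P ^ 2 + Q ^ 2 ≤ (M / μ) ^ 2 * (a ^ 2 + b ^ 2) := by
    have hμ2 : (0:ℝ) < μ ^ 2 := by positivity
    rw [div_pow, div_mul_eq_mul_div, le_div_iff₀ hμ2]
    linarith [hsq]
  calc Real.sqrt (P ^ 2 + Q ^ 2) ≤ Real.sqrt ((M / μ) ^ 2 * (a ^ 2 + b ^ 2)) :=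
      Real.sqrt_le_sqrt hdiv
  _ = M / μ * Real.sqrt (a ^ 2 + b ^ 2) := by
      rw [Real.sqrt_mul (sq_nonneg _), Real.sqrt_sq (div_nonneg hM0 hμ.le)]

set_option maxHeartbeats 2000000 in
/-- `θ` is continuously differentiable with `(γ/μ)`-Lipschitz gradient. -/
theorem stmt_4 (n m q : ℕ) (μ Lg : ℝ) (hμ : 0 < μ) (hLg : 0 < Lg)
    (ψ : EuclideanSpace ℝ (Fin m) → EReal)
    (hproper_top : ∃ y, ψ y ≠ ⊤) (hproper_bot : ∀ y, ψ y ≠ ⊥)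
    (hlsc : LowerSemicontinuous ψ)
    (hsc : ERealConvexOn (fun y => ψ y - ((μ / 2 * ‖y‖ ^ 2 : ℝ) : EReal)))
    (ψs : EuclideanSpace ℝ (Fin m) → ℝ)
    (hconj : ∀ v, ((ψs v : ℝ) : EReal) = ⨆ y, ((⟪v, y⟫ : EReal) - ψ y))
    (g : EuclideanSpace ℝ (Fin n) → ℝ)
    (g' : EuclideanSpace ℝ (Fin n) → EuclideanSpace ℝ (Fin n))
    (hg : ∀ x, HasGradientAt g (g' x) x)
    (hgconv : ConvexOn ℝ Set.univ g)
    (hglip : ∀ x x', ‖g' x' - g' x‖ ≤ Lg * ‖x' - x‖)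
    (K : EuclideanSpace ℝ (Fin m) →L[ℝ] EuclideanSpace ℝ (Fin n))
    (A : EuclideanSpace ℝ (Fin n) →L[ℝ] EuclideanSpace ℝ (Fin q))
    (B : EuclideanSpace ℝ (Fin m) →L[ℝ] EuclideanSpace ℝ (Fin q))
    (c : EuclideanSpace ℝ (Fin q))
    (θ : EuclideanSpace ℝ (Fin n) → EuclideanSpace ℝ (Fin q) → ℝ)
    (hθ : ∀ x lam, θ x lam = g x + ⟪lam, A x + c⟫
      + ψs (ContinuousLinearMap.adjoint K x + ContinuousLinearMap.adjoint B lam)) :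
    ∃ θx : EuclideanSpace ℝ (Fin n) → EuclideanSpace ℝ (Fin q) → EuclideanSpace ℝ (Fin n),
    ∃ θl : EuclideanSpace ℝ (Fin n) → EuclideanSpace ℝ (Fin q) → EuclideanSpace ℝ (Fin q),
      (∀ x lam, HasGradientAt (fun x' => θ x' lam) (θx x lam) x) ∧
      (∀ x lam, HasGradientAt (fun l' => θ x l') (θl x lam) lam) ∧
      Continuous (fun p : EuclideanSpace ℝ (Fin n) × EuclideanSpace ℝ (Fin q) =>
        (θx p.1 p.2, θl p.1 p.2)) ∧
      (∀ x0 x1 l0 l1,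
        Real.sqrt (‖θx x0 l0 - θx x1 l1‖ ^ 2 + ‖θl x0 l0 - θl x1 l1‖ ^ 2)
          ≤ (max (Real.sqrt (2 * (Lg * μ + ‖K‖ ^ 2) ^ 2 + 2 * (‖A‖ * μ + ‖K‖ * ‖B‖) ^ 2))
                 (Real.sqrt (2 * (μ * ‖A‖ + ‖K‖ * ‖B‖) ^ 2 + 2 * ‖B‖ ^ 4)) / μ)
            * Real.sqrt (‖x0 - x1‖ ^ 2 + ‖l0 - l1‖ ^ 2)) := by
  obtain ⟨Y, hYgrad, hYlip, hYcont⟩ := conj_smooth hμ hproper_top hproper_bot hlsc hsc hconj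
  set Kt := ContinuousLinearMap.adjoint K with hKt
  set At := ContinuousLinearMap.adjoint A with hAt
  set Bt := ContinuousLinearMap.adjoint B with hBt
  refine ⟨fun x lam => g' x + At lam + K (Y (Kt x + Bt lam)),
          fun x lam => A x + c + B (Y (Kt x + Bt lam)), ?_, ?_, ?_, ?_⟩
  · -- gradient in x
    intro x lam
    have hfun : (fun x' => θ x' lam)
        = fun x' => g x' + ⟪lam, A x' + c⟫ + ψs (Kt x' + Bt lam) :=
      funext fun x' => hθ x' lam
    rw [hfun, hasGradientAt_iff_hasFDerivAt]
    have h1 : HasFDerivAt g (InnerProductSpace.toDual ℝ _ (g' x) : _) x :=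
      (hg x).hasFDerivAt
    have h2 : HasFDerivAt (fun x' => ⟪lam, A x' + c⟫)
        (InnerProductSpace.toDual ℝ _ (At lam) : _) x := by
      have e : (fun x' : EuclideanSpace ℝ (Fin n) => ⟪lam, A x' + c⟫)
          = fun x' => (InnerProductSpace.toDual ℝ _ (At lam) : _) x' + ⟪lam, c⟫ := by
        funext x'
        simp only [InnerProductSpace.toDual_apply_apply, inner_add_right, hAt,
          ContinuousLinearMap.adjoint_inner_left]
      rw [e]
      exact ((InnerProductSpace.toDual ℝ _ (At lam) : _ →L[ℝ] ℝ).hasFDerivAt).add_const _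
    have haff : HasFDerivAt (fun x' => Kt x' + Bt lam) (Kt : _ →L[ℝ] _) x :=
      (Kt.hasFDerivAt).add_const _
    have hψ : HasFDerivAt ψs
        (InnerProductSpace.toDual ℝ _ (Y (Kt x + Bt lam)) : _) (Kt x + Bt lam) :=
      (hYgrad _).hasFDerivAt
    have h3 : HasFDerivAt (fun x' => ψs (Kt x' + Bt lam))
        (InnerProductSpace.toDual ℝ _ (K (Y (Kt x + Bt lam))) : _) x := by
      have := hψ.comp x haff
      have ecomp : (InnerProductSpace.toDual ℝ _ (Y (Kt x + Bt lam)) : _ →L[ℝ] ℝ).comp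
            (Kt : _ →L[ℝ] _)
          = (InnerProductSpace.toDual ℝ _ (K (Y (Kt x + Bt lam))) : _) := by
        ext z
        simp only [ContinuousLinearMap.coe_comp', Function.comp_apply,
          InnerProductSpace.toDual_apply_apply, hKt, ContinuousLinearMap.adjoint_inner_right]
      rw [ecomp] at this
      exact this
    have hsum := (h1.add h2).add h3
    have : (InnerProductSpace.toDual ℝ _ (g' x) : _) + InnerProductSpace.toDual ℝ _ (At lam)
        + InnerProductSpace.toDual ℝ _ (K (Y (Kt x + Bt lam)))
        = InnerProductSpace.toDual ℝ _ (g' x + At lam + K (Y (Kt x + Bt lam))) := by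
      simp [map_add]
    rw [this] at hsum
    exact hsum
  · -- gradient in lam
    intro x lam
    have hfun : (fun l' => θ x l')
        = fun l' => g x + ⟪l', A x + c⟫ + ψs (Kt x + Bt l') :=
      funext fun l' => hθ x l'
    rw [hfun, hasGradientAt_iff_hasFDerivAt]
    have h2 : HasFDerivAt (fun l' : EuclideanSpace ℝ (Fin q) => g x + ⟪l', A x + c⟫)
        (InnerProductSpace.toDual ℝ _ (A x + c) : _) lam := by
      have e : (fun l' : EuclideanSpace ℝ (Fin q) => g x + ⟪l', A x + c⟫)
          = fun l' => g x + (InnerProductSpace.toDual ℝ _ (A x + c) : _) l' := by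
        funext l'
        simp only [InnerProductSpace.toDual_apply_apply]
        rw [real_inner_comm]
      rw [e]
      exact ((InnerProductSpace.toDual ℝ _ (A x + c) : _ →L[ℝ] ℝ).hasFDerivAt).const_add _
    have haff : HasFDerivAt (fun l' => Kt x + Bt l') (Bt : _ →L[ℝ] _) lam :=
      (Bt.hasFDerivAt).const_add _
    have hψ : HasFDerivAt ψs
        (InnerProductSpace.toDual ℝ _ (Y (Kt x + Bt lam)) : _) (Kt x + Bt lam) :=
      (hYgrad _).hasFDerivAt
    have h3 : HasFDerivAt (fun l' => ψs (Kt x + Bt l'))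
        (InnerProductSpace.toDual ℝ _ (B (Y (Kt x + Bt lam))) : _) lam := by
      have := hψ.comp lam haff
      have ecomp : (InnerProductSpace.toDual ℝ _ (Y (Kt x + Bt lam)) : _ →L[ℝ] ℝ).comp
            (Bt : _ →L[ℝ] _)
          = (InnerProductSpace.toDual ℝ _ (B (Y (Kt x + Bt lam))) : _) := by
        ext z
        simp only [ContinuousLinearMap.coe_comp', Function.comp_apply,
          InnerProductSpace.toDual_apply_apply, hBt, ContinuousLinearMap.adjoint_inner_right]
      rw [ecomp] at this
      exact this
    have hsum := h2.add h3
    have : (InnerProductSpace.toDual ℝ _ (A x + c) : _)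
        + InnerProductSpace.toDual ℝ _ (B (Y (Kt x + Bt lam)))
        = InnerProductSpace.toDual ℝ _ (A x + c + B (Y (Kt x + Bt lam))) := by
      simp [map_add]
    rw [this] at hsum
    exact hsum
  · -- continuity
    have hg'cont : Continuous g' := by
      have : LipschitzWith (Real.toNNReal Lg) g' := by
        apply LipschitzWith.of_dist_le_mul
        intro a b
        rw [dist_eq_norm, dist_eq_norm, Real.coe_toNNReal _ hLg.le]
        exact hglip b a
      exact this.continuous
    have hvcont : Continuous (fun p : EuclideanSpace ℝ (Fin n) × EuclideanSpace ℝ (Fin q) =>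
        Kt p.1 + Bt p.2) := (Kt.continuous.comp continuous_fst).add (Bt.continuous.comp continuous_snd)
    have hYc : Continuous (fun p : EuclideanSpace ℝ (Fin n) × EuclideanSpace ℝ (Fin q) =>
        Y (Kt p.1 + Bt p.2)) := hYcont.comp hvcont
    apply Continuous.prodMk
    · exact ((hg'cont.comp continuous_fst).add (At.continuous.comp continuous_snd)).add
        (K.continuous.comp hYc)
    · exact ((A.continuous.comp continuous_fst).add continuous_const).add
        (B.continuous.comp hYc)
  · -- the Lipschitz bound
    intro x0 x1 l0 l1
    set a := ‖x0 - x1‖ with ha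
    set b := ‖l0 - l1‖ with hb
    have ha0 : 0 ≤ a := norm_nonneg _
    have hb0 : 0 ≤ b := norm_nonneg _
    set v0 := Kt x0 + Bt l0 with hv0
    set v1 := Kt x1 + Bt l1 with hv1
    have hKn : ‖Kt‖ = ‖K‖ := ContinuousLinearMap.adjoint.norm_map K
    have hBn : ‖Bt‖ = ‖B‖ := ContinuousLinearMap.adjoint.norm_map B
    have hvd : ‖v0 - v1‖ ≤ ‖K‖ * a + ‖B‖ * b := by
      have e : v0 - v1 = Kt (x0 - x1) + Bt (l0 - l1) := by
        simp only [hv0, hv1, map_sub]; abel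
      rw [e]
      calc ‖Kt (x0 - x1) + Bt (l0 - l1)‖ ≤ ‖Kt (x0 - x1)‖ + ‖Bt (l0 - l1)‖ := norm_add_le _ _
      _ ≤ ‖Kt‖ * a + ‖Bt‖ * b := add_le_add (Kt.le_opNorm _) (Bt.le_opNorm _)
      _ = ‖K‖ * a + ‖B‖ * b := by rw [hKn, hBn]
    have hYd : μ * ‖Y v0 - Y v1‖ ≤ ‖K‖ * a + ‖B‖ * b := le_trans (hYlip v1 v0) hvd
    have hYd' : ‖Y v0 - Y v1‖ ≤ (‖K‖ * a + ‖B‖ * b) / μ := by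
      rw [le_div_iff₀ hμ]; linarith [hYd]
    -- bound on θx difference
    have hx : ‖(g' x0 + At l0 + K (Y v0)) - (g' x1 + At l1 + K (Y v1))‖
        ≤ (Lg * μ + ‖K‖ ^ 2) / μ * a + (‖A‖ * μ + ‖K‖ * ‖B‖) / μ * b := by
      have e : (g' x0 + At l0 + K (Y v0)) - (g' x1 + At l1 + K (Y v1))
          = (g' x0 - g' x1) + At (l0 - l1) + K (Y v0 - Y v1) := by
        simp only [map_sub]; abel
      rw [e]
      have t1 : ‖g' x0 - g' x1‖ ≤ Lg * a := hglip x1 x0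
      have t2 : ‖At (l0 - l1)‖ ≤ ‖A‖ * b := by
        have := At.le_opNorm (l0 - l1)
        rwa [ContinuousLinearMap.adjoint.norm_map A] at this
      have t3 : ‖K (Y v0 - Y v1)‖ ≤ ‖K‖ * ((‖K‖ * a + ‖B‖ * b) / μ) := by
        calc ‖K (Y v0 - Y v1)‖ ≤ ‖K‖ * ‖Y v0 - Y v1‖ := K.le_opNorm _
        _ ≤ ‖K‖ * ((‖K‖ * a + ‖B‖ * b) / μ) :=
          mul_le_mul_of_nonneg_left hYd' (norm_nonneg K)
      calc ‖(g' x0 - g' x1) + At (l0 - l1) + K (Y v0 - Y v1)‖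
          ≤ ‖(g' x0 - g' x1) + At (l0 - l1)‖ + ‖K (Y v0 - Y v1)‖ := norm_add_le _ _
      _ ≤ (‖g' x0 - g' x1‖ + ‖At (l0 - l1)‖) + ‖K (Y v0 - Y v1)‖ :=
          add_le_add (norm_add_le _ _) le_rfl
      _ ≤ (Lg * a + ‖A‖ * b) + ‖K‖ * ((‖K‖ * a + ‖B‖ * b) / μ) := by
          exact add_le_add (add_le_add t1 t2) t3
      _ = (Lg * μ + ‖K‖ ^ 2) / μ * a + (‖A‖ * μ + ‖K‖ * ‖B‖) / μ * b := by
          field_simp; ring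
    have hl : ‖(A x0 + c + B (Y v0)) - (A x1 + c + B (Y v1))‖
        ≤ (μ * ‖A‖ + ‖K‖ * ‖B‖) / μ * a + ‖B‖ ^ 2 / μ * b := by
      have e : (A x0 + c + B (Y v0)) - (A x1 + c + B (Y v1))
          = A (x0 - x1) + B (Y v0 - Y v1) := by
        simp only [map_sub]; abel
      rw [e]
      have t1 : ‖A (x0 - x1)‖ ≤ ‖A‖ * a := A.le_opNorm _
      have t3 : ‖B (Y v0 - Y v1)‖ ≤ ‖B‖ * ((‖K‖ * a + ‖B‖ * b) / μ) := by
        calc ‖B (Y v0 - Y v1)‖ ≤ ‖B‖ * ‖Y v0 - Y v1‖ := B.le_opNorm _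
        _ ≤ ‖B‖ * ((‖K‖ * a + ‖B‖ * b) / μ) :=
          mul_le_mul_of_nonneg_left hYd' (norm_nonneg B)
      calc ‖A (x0 - x1) + B (Y v0 - Y v1)‖
          ≤ ‖A (x0 - x1)‖ + ‖B (Y v0 - Y v1)‖ := norm_add_le _ _
      _ ≤ ‖A‖ * a + ‖B‖ * ((‖K‖ * a + ‖B‖ * b) / μ) := add_le_add t1 t3
      _ = (μ * ‖A‖ + ‖K‖ * ‖B‖) / μ * a + ‖B‖ ^ 2 / μ * b := by
          field_simp; ring
    -- now the sqrt computation
    beta_reduce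
    set c1 : ℝ := Lg * μ + ‖K‖ ^ 2 with hc1
    set c2 : ℝ := ‖A‖ * μ + ‖K‖ * ‖B‖ with hc2
    set c3 : ℝ := μ * ‖A‖ + ‖K‖ * ‖B‖ with hc3
    have hc10 : 0 ≤ c1 := by positivity
    have hc20 : 0 ≤ c2 := by positivity
    have hc30 : 0 ≤ c3 := by positivity
    set M : ℝ := max (Real.sqrt (2 * c1 ^ 2 + 2 * c2 ^ 2))
        (Real.sqrt (2 * c3 ^ 2 + 2 * ‖B‖ ^ 4)) with hM
    have hM0 : 0 ≤ M := le_trans (Real.sqrt_nonneg _) (le_max_left _ _)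
    have hM2 : c1 ^ 2 + c2 ^ 2 + c3 ^ 2 + (‖B‖ ^ 2) ^ 2 ≤ M ^ 2 := by
      have hX : (0:ℝ) ≤ 2 * c1 ^ 2 + 2 * c2 ^ 2 := by positivity
      have hY : (0:ℝ) ≤ 2 * c3 ^ 2 + 2 * ‖B‖ ^ 4 := by positivity
      have e1 : Real.sqrt (2 * c1 ^ 2 + 2 * c2 ^ 2) ^ 2 = 2 * c1 ^ 2 + 2 * c2 ^ 2 :=
        Real.sq_sqrt hX
      have e2 : Real.sqrt (2 * c3 ^ 2 + 2 * ‖B‖ ^ 4) ^ 2 = 2 * c3 ^ 2 + 2 * ‖B‖ ^ 4 :=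
        Real.sq_sqrt hY
      rcases le_total (Real.sqrt (2 * c1 ^ 2 + 2 * c2 ^ 2))
          (Real.sqrt (2 * c3 ^ 2 + 2 * ‖B‖ ^ 4)) with h | h
      · rw [hM, max_eq_right h]
        have hXY : 2 * c1 ^ 2 + 2 * c2 ^ 2 ≤ 2 * c3 ^ 2 + 2 * ‖B‖ ^ 4 := by
          have := pow_le_pow_left₀ (Real.sqrt_nonneg _) h 2
          rwa [e1, e2] at this
        rw [e2]
        nlinarith [hXY]
      · rw [hM, max_eq_left h]
        have hXY : 2 * c3 ^ 2 + 2 * ‖B‖ ^ 4 ≤ 2 * c1 ^ 2 + 2 * c2 ^ 2 := by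
          have := pow_le_pow_left₀ (Real.sqrt_nonneg _) h 2
          rwa [e1, e2] at this
        rw [e1]
        nlinarith [hXY]
    set P : ℝ := ‖(g' x0 + At l0 + K (Y v0)) - (g' x1 + At l1 + K (Y v1))‖ with hP
    set Q : ℝ := ‖(A x0 + c + B (Y v0)) - (A x1 + c + B (Y v1))‖ with hQ
    have hP0 : 0 ≤ P := norm_nonneg _
    have hQ0 : 0 ≤ Q := norm_nonneg _
    have hB20 : (0:ℝ) ≤ ‖B‖ ^ 2 := by positivity
    clear_value a b c1 c2 c3 M P Q
    have hxP : μ * P ≤ c1 * a + c2 * b := by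
      have h1 := mul_le_mul_of_nonneg_left hx hμ.le
      have e : μ * (c1 / μ * a + c2 / μ * b) = c1 * a + c2 * b := by field_simp
      linarith [h1, e.le, e.ge]
    have hxQ : μ * Q ≤ c3 * a + ‖B‖ ^ 2 * b := by
      have h1 := mul_le_mul_of_nonneg_left hl hμ.le
      have e : μ * (c3 / μ * a + ‖B‖ ^ 2 / μ * b) = c3 * a + ‖B‖ ^ 2 * b := by field_simp
      linarith [h1, e.le, e.ge]
    exact final_ineq μ c1 c2 c3 (‖B‖ ^ 2) a b P Q M hμ hP0 hQ0 hM0 hxP hxQ hM2
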